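/- Let h be a symmetric bilinear map on ℝⁿ with values in a 2-dimensional Lorentzian space spanned by light-like vectors θ, ξ with ⟨θ,ξ⟩ = -1, ⟨θ,θ⟩ = ⟨ξ,ξ⟩ = 0, given on an orthonormal basis by h(e₁,e₁) = μθ, h(e₁,e_a) = ν_a θ, h(e_a,e_a) = -β_a θ + ξ, h(e_a,e_b) = 0 for 2 ≤ a ≠ b ≤ n. If ⟨h(X,X), h(X,X)⟩ = λ for every unit vector X, then λ = 0 and β_a = 0 for all a = 2,...,n when n = 2; and in general λ = 0. -/

import Mathlib

/-!
Test the isotropy condition on the basis vectors, using `⟨pθ + qξ, pθ + qξ⟩ = -2pq`: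
`h(e₁,e₁) = μθ` is light-like, so `λ = 0`, and then `2β_a = ⟨h(e_a,e_a), h(e_a,e_a)⟩ = λ = 0`.
-/

/-- Lorentzian form on the coefficient space `span{θ,ξ}`, where a pair `(p,q)`
represents `pθ + qξ` with `⟨θ,θ⟩ = ⟨ξ,ξ⟩ = 0` and `⟨θ,ξ⟩ = -1`. -/
noncomputable def ipθξ (v w : ℝ × ℝ) : ℝ := -(v.1 * w.2) - v.2 * w.1

theorem sum_sq_single_one {ι R : Type*} [Fintype ι] [DecidableEq ι] [Semiring R] (j : ι) :
    ∑ i, (Pi.single j 1 : ι → R) i ^ 2 = 1 := by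
  simp [sq, Pi.single_apply]

theorem ipθξ_self (p q : ℝ) : ipθξ (p, q) (p, q) = -2 * p * q := by
  simp only [ipθξ]
  ring

theorem stmt_16 (n : ℕ)
    (h : (Fin n → ℝ) →ₗ[ℝ] (Fin n → ℝ) →ₗ[ℝ] ℝ × ℝ)
    (e : Fin n → Fin n → ℝ) (he : e = fun i => Pi.single i 1)
    (μ : ℝ) (β : Fin n → ℝ) (e₁ : Fin n)
    (h11 : h (e e₁) (e e₁) = (μ, 0))
    (haa : ∀ a, a ≠ e₁ → h (e a) (e a) = (-(β a), 1))
    (lam : ℝ)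
    (hiso : ∀ X : Fin n → ℝ, ∑ i, (X i) ^ 2 = 1 → ipθξ (h X X) (h X X) = lam) :
    lam = 0 ∧ (n = 2 → ∀ a, a ≠ e₁ → β a = 0) := by
  subst he
  have hlam : lam = 0 := by
    have h1 := hiso _ (sum_sq_single_one e₁)
    rw [h11, ipθξ_self] at h1
    linarith
  refine ⟨hlam, fun _ a ha => ?_⟩
  have ha' := hiso _ (sum_sq_single_one a)
  rw [haa a ha, ipθξ_self] at ha'
  linarith
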